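/- arXiv:math/0605535 — 4 statements merged into one kernel-verified Lean document; each statement's English description precedes it below -/
import Mathlib

section
/- For a permutation τ of {0,...,k} and p in {0,...,k}, let τ_p be the unique permutation of {0,...,k-1} satisfying τ ∘ ι_{k,p} = ι_{k,τ(p)} ∘ τ_p, where ι_{k,p}: {0,...,k-1} → {0,...,k} is the order-preserving injection omitting p. Then sign(τ_p) = (-1)^{p+τ(p)} · sign(τ). -/
/-- Let `τ` be a permutation of `{0,…,k}` and `p ∈ {0,…,k}`.
If `τ_p` is the (unique) permutation of `{0,…,k-1}` satisfying
`τ ∘ ι_{k,p} = ι_{k,τ(p)} ∘ τ_p`, where `ι_{k,p} = Fin.succAbove p` is the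
order-preserving injection omitting `p`, then
`sign τ_p = (-1)^(p + τ(p)) · sign τ`.
(Here `{0,…,k}` is `Fin (k+1)` and `{0,…,k-1}` is `Fin k`.) -/
theorem sign_face_permutation (k : ℕ) (τ : Equiv.Perm (Fin (k+1))) (p : Fin (k+1))
    (τp : Equiv.Perm (Fin k))
    (hτp : ∀ q : Fin k, τ (p.succAbove q) = (τ p).succAbove (τp q)) :
    (Equiv.Perm.sign τp : ℤ) = (-1 : ℤ)^((p : ℕ) + ((τ p : Fin (k+1)) : ℕ)) *
      (Equiv.Perm.sign τ : ℤ) := by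
  have hσ : (τ p).cycleRange * τ * (p.cycleRange)⁻¹
      = Equiv.Perm.decomposeFin.symm (0, τp) := by
    apply Equiv.ext
    intro x
    induction x using Fin.cases with
    | zero =>
      simp [Equiv.Perm.mul_apply, Equiv.Perm.inv_def,
        Equiv.Perm.decomposeFin_symm_apply_zero,
        Fin.cycleRange_symm_zero, Fin.cycleRange_self]
    | succ q =>
      simp [Equiv.Perm.mul_apply, Equiv.Perm.inv_def, Fin.cycleRange_symm_succ, hτp,
        Fin.cycleRange_succAbove, Equiv.Perm.decomposeFin_symm_apply_succ]
  have hs := congrArg Equiv.Perm.sign hσ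
  simp only [map_mul, map_inv, Fin.sign_cycleRange,
    Equiv.Perm.decomposeFin.symm_sign, if_pos rfl, one_mul, inv_pow, inv_neg, inv_one] at hs
  have hinv : ((-1:ℤˣ)^((p:ℕ)))⁻¹ = (-1)^((p:ℕ)) := by
    rw [← inv_pow]; norm_num
  rw [if_true, one_mul, hinv] at hs
  have h2 : (Equiv.Perm.sign τp : ℤˣ)
      = (-1)^((p : ℕ) + ((τ p : Fin (k+1)) : ℕ)) * Equiv.Perm.sign τ := by
    rw [pow_add, ← hs, mul_comm, ← mul_assoc]
  have h3 := congrArg Units.val h2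
  push_cast at h3
  simpa using h3
end

section
/- Let X be a topological space and S_*(X) its singular chain complex with integer coefficients. Let S'_*(X) ⊂ S_*(X) be the subgroup generated by all elements f − sign(τ)·(f ∘ τ), where f: Δ^k → X is a singular k-simplex, τ ranges over permutations of the vertices of Δ^k acting by the induced affine self-map of Δ^k, and k ≥ 0. Then S'_*(X) is a subcomplex: the singular boundary operator maps S'_*(X) into S'_*(X). -/
open scoped BigOperators
noncomputable section

/-- The standard `k`-simplex, in barycentric coordinates. -/
abbrev Δ (k : ℕ) : Type := ↥(stdSimplex ℝ (Fin (k+1)))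

/-- The `p`-th face inclusion `Δ^k → Δ^{k+1}`. -/
def faceMap (k : ℕ) (p : Fin (k+2)) : C(Δ k, Δ (k+1)) where
  toFun x := ⟨fun j => ∑ i, if p.succAbove i = j then x.1 i else 0, by
    constructor
    · intro j
      refine Finset.sum_nonneg fun i _ => ?_
      by_cases h : p.succAbove i = j
      · simpa [h] using x.2.1 i
      · simp [h]
    · rw [Finset.sum_comm]
      have h1 : ∀ i : Fin (k+1), (∑ j, if p.succAbove i = j then x.1 i else 0) = x.1 i := by
        intro i; simp
      simp_rw [h1]
      exact x.2.2⟩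
  continuous_toFun := by
    apply Continuous.subtype_mk
    refine continuous_pi fun j => ?_
    refine continuous_finset_sum _ fun i _ => ?_
    by_cases h : p.succAbove i = j
    · simp only [h, ↓reduceIte]
      exact (continuous_apply i).comp continuous_subtype_val
    · simpa [h] using continuous_const

/-- The affine action of a permutation of the vertices on the standard simplex. -/
def permMap (k : ℕ) (τ : Equiv.Perm (Fin (k+1))) : C(Δ k, Δ k) where
  toFun x := ⟨fun j => x.1 (τ⁻¹ j), by
    refine ⟨fun j => x.2.1 _, ?_⟩
    rw [Equiv.sum_comp τ⁻¹ x.1]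
    exact x.2.2⟩
  continuous_toFun := by
    apply Continuous.subtype_mk
    exact continuous_pi fun j => (continuous_apply _).comp continuous_subtype_val

/-- Singular `k`-chains with integer coefficients. -/
abbrev chain (X : Type) [TopologicalSpace X] (k : ℕ) : Type := FreeAbelianGroup C(Δ k, X)

/-- The singular boundary operator. -/
def bdry (X : Type) [TopologicalSpace X] (k : ℕ) : chain X (k+1) →+ chain X k :=
  ∑ p : Fin (k+2),
    ((-1 : ℤ)^(p : ℕ)) • FreeAbelianGroup.map (fun f : C(Δ (k+1), X) => f.comp (faceMap k p))

/-- Cycles (in degree `0` every chain is a cycle). -/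
def IsCycle (X : Type) [TopologicalSpace X] : ∀ k : ℕ, chain X k → Prop
  | 0, _ => True
  | (k+1), x => bdry X k x = 0

/-- The subgroup `S'_*(X)` generated by `f - sign τ • (f ∘ τ)`. -/
def Sprime (X : Type) [TopologicalSpace X] (k : ℕ) : AddSubgroup (chain X k) :=
  AddSubgroup.closure
    { x | ∃ (f : C(Δ k, X)) (τ : Equiv.Perm (Fin (k+1))),
        x = FreeAbelianGroup.of f
          - (Equiv.Perm.sign τ : ℤ) • FreeAbelianGroup.of (f.comp (permMap k τ)) }

/-- Pushforward of chains along a continuous map. -/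
def chainMap {X Y : Type} [TopologicalSpace X] [TopologicalSpace Y] (g : C(X, Y)) (k : ℕ) :
    chain X k →+ chain Y k :=
  FreeAbelianGroup.map fun f : C(Δ k, X) => g.comp f

end

/-!
The boundary of a generator `f - sign τ • (f ∘ τ)` is again a signed sum of generators: the
permutation `τ` carries the `p`-th face of `Δ^{k+1}` onto its `τ p`-th face, inducing on it a
permutation `σ_p` of the vertices of `Δ^k` with `(-1)^p sign τ = (-1)^(τ p) sign σ_p`. Hence the
`p`-th face of `f ∘ τ` is the `τ p`-th face of `f` precomposed with `σ_p`, and regrouping the two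
boundary sums along `τ` gives, with `g_p` the `τ p`-th face of `f`,
`∂(f - sign τ • (f ∘ τ)) = ∑_p (-1)^(τ p) • (g_p - sign σ_p • (g_p ∘ σ_p))`.
-/

open Equiv Equiv.Perm

theorem Equiv.Perm.exists_apply_succ_of_apply_zero {n : ℕ} (π : Perm (Fin (n + 1)))
    (h : π 0 = 0) : ∃ σ : Perm (Fin n), (∀ i, π i.succ = (σ i).succ) ∧ sign σ = sign π := by
  obtain ⟨⟨q, σ⟩, rfl⟩ := decomposeFin.symm.surjective π
  obtain rfl : q = 0 := by simpa using h
  exact ⟨σ, fun i => by simp [decomposeFin_symm_apply_succ], by simp [decomposeFin.symm_sign]⟩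

theorem Equiv.Perm.exists_apply_succAbove {n : ℕ} (τ : Perm (Fin (n + 1))) (p : Fin (n + 1)) :
    ∃ σ : Perm (Fin n), (∀ i, τ (p.succAbove i) = (τ p).succAbove (σ i)) ∧
      (-1 : ℤ) ^ (p : ℕ) * sign τ = (-1) ^ (τ p : ℕ) * sign σ := by
  -- `cycleRange q` sends `q` to `0` and `q.succAbove i` to `i.succ`
  set π : Perm (Fin (n + 1)) := (τ p).cycleRange * τ * p.cycleRange⁻¹
  obtain ⟨σ, hσ, hsign⟩ := π.exists_apply_succ_of_apply_zero (by simp [π])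
  refine ⟨σ, fun i => (τ p).cycleRange.injective ?_, ?_⟩
  · simpa [π] using hσ i
  · have hπ : (sign π : ℤ) = (-1) ^ (τ p : ℕ) * sign τ * (-1) ^ (p : ℕ) := by
      simp [π, Fin.sign_cycleRange]
    rw [hsign, hπ, ← mul_assoc, ← mul_assoc, ← pow_add, ← two_mul, pow_mul]
    ring

theorem permMap_comp_faceMap {k : ℕ} {τ : Perm (Fin (k + 2))} {p : Fin (k + 2)}
    {σ : Perm (Fin (k + 1))} (h : ∀ i, τ (p.succAbove i) = (τ p).succAbove (σ i)) :
    (permMap (k + 1) τ).comp (faceMap k p) = (faceMap k (τ p)).comp (permMap k σ) := by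
  ext x j
  change (∑ i, if p.succAbove i = τ⁻¹ j then x.1 i else 0)
    = ∑ i, if (τ p).succAbove i = j then x.1 (σ⁻¹ i) else 0
  refine Fintype.sum_equiv σ _ _ fun i => ?_
  simp [← h, Equiv.eq_symm_apply]

theorem bdry_of {X : Type} [TopologicalSpace X] {k : ℕ} (f : C(Δ (k + 1), X)) :
    bdry X k (FreeAbelianGroup.of f)
      = ∑ p : Fin (k + 2), (-1 : ℤ) ^ (p : ℕ) • FreeAbelianGroup.of (f.comp (faceMap k p)) := by
  simp [bdry, FreeAbelianGroup.map_of_apply]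

theorem bdry_of_sub_sign_smul_of_comp_permMap_mem_Sprime {X : Type} [TopologicalSpace X] {k : ℕ}
    (f : C(Δ (k + 1), X)) (τ : Perm (Fin (k + 2))) :
    bdry X k (FreeAbelianGroup.of f
      - (sign τ : ℤ) • FreeAbelianGroup.of (f.comp (permMap (k + 1) τ))) ∈ Sprime X k := by
  choose σ hσ hsign using τ.exists_apply_succAbove
  have hregroup : bdry X k (FreeAbelianGroup.of f
        - (sign τ : ℤ) • FreeAbelianGroup.of (f.comp (permMap (k + 1) τ)))
      = ∑ p, (-1 : ℤ) ^ (τ p : ℕ) • (FreeAbelianGroup.of (f.comp (faceMap k (τ p)))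
          - (sign (σ p) : ℤ) •
            FreeAbelianGroup.of ((f.comp (faceMap k (τ p))).comp (permMap k (σ p)))) := by
    rw [map_sub, map_zsmul, bdry_of, bdry_of, ← Equiv.sum_comp τ]
    simp only [smul_sub, Finset.sum_sub_distrib, Finset.smul_sum, smul_smul]
    congr 1
    refine Finset.sum_congr rfl fun p _ => ?_
    rw [f.comp_assoc, permMap_comp_faceMap (hσ p), ← f.comp_assoc, mul_comm, hsign p]
  rw [hregroup]
  refine AddSubgroup.sum_mem _ fun p _ => AddSubgroup.zsmul_mem _ (AddSubgroup.subset_closure ?_) _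
  exact ⟨_, σ p, rfl⟩

/-- The subgroup `S'_*(X)` generated by the elements
`f - sign τ • (f ∘ τ)` is a subcomplex of the singular chain complex:
the boundary operator maps `S'_{k+1}(X)` into `S'_k(X)`. -/
theorem sprime_isSubcomplex (X : Type) [TopologicalSpace X] (k : ℕ) :
    ∀ x ∈ Sprime X (k+1), bdry X k x ∈ Sprime X k := by
  have hle : Sprime X (k + 1) ≤ (Sprime X k).comap (bdry X k) := by
    rw [Sprime, AddSubgroup.closure_le]
    rintro _ ⟨f, τ, rfl⟩
    exact bdry_of_sub_sign_smul_of_comp_permMap_mem_Sprime f τ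
  exact fun x hx => hle hx
end

section
/- Let M be a locally compact Hausdorff space, let X be a topological space, and let f: M → X be a continuous map with f(M) precompact. Let Bd f = ∩_{K ⊆ M compact} cl(f(M−K)). If U is an open set containing Bd f, then M − f^{-1}(U) is a compact subset of M. -/
/-- The "boundary at infinity" of a map `f : M → X`: the intersection over all compact
subsets `K ⊆ M` of the closures of `f(M − K)`. -/
def Bd {M X : Type} [TopologicalSpace M] [TopologicalSpace X] (f : M → X) : Set X :=
  ⋂ K ∈ {K : Set M | IsCompact K}, closure (f '' Kᶜ)

/-- Let `f : M → X` be a continuous map with precompact image from a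
locally compact Hausdorff space `M`.  If `U` is an open set containing `Bd f`, then
`M − f⁻¹(U)` is compact. -/
theorem compl_preimage_nbhd_bd_compact {M X : Type} [TopologicalSpace M]
    [LocallyCompactSpace M] [T2Space M] [TopologicalSpace X] (f : M → X)
    (hf : Continuous f) (hpre : IsCompact (closure (Set.range f)))
    (U : Set X) (hU : IsOpen U) (hBd : Bd f ⊆ U) :
    IsCompact ((f ⁻¹' U)ᶜ) := by
  -- The compact set `C = closure (range f) \ U` avoids `Bd f`.
  set C : Set X := closure (Set.range f) \ U with hC
  have hCcomp : IsCompact C :=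
    hpre.of_isClosed_subset (isClosed_closure.sdiff hU) Set.diff_subset
  -- Cover C by the open complements of `closure (f '' Kᶜ)` over compact K.
  have hcover : C ⊆ ⋃ K ∈ {K : Set M | IsCompact K}, (closure (f '' Kᶜ))ᶜ := by
    intro x hx
    have hxU : x ∉ U := hx.2
    have hxBd : x ∉ Bd f := fun h => hxU (hBd h)
    simp only [Bd, Set.mem_iInter, not_forall] at hxBd
    obtain ⟨K, hK, hxK⟩ := hxBd
    exact Set.mem_biUnion hK hxK
  obtain ⟨t, htsub, htfin, htcov⟩ := hCcomp.elim_finite_subcover_image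
    (fun K hK => (isClosed_closure).isOpen_compl) hcover
  -- K₀ = union of the finitely many compact sets
  set K₀ : Set M := ⋃ K ∈ t, K with hK₀
  have hK₀comp : IsCompact K₀ := htfin.isCompact_biUnion (fun K hK => htsub hK)
  -- (f ⁻¹' U)ᶜ ⊆ K₀
  have hsub : (f ⁻¹' U)ᶜ ⊆ K₀ := by
    intro m hm
    by_contra hmK
    have hfm : f m ∈ C := ⟨subset_closure ⟨m, rfl⟩, hm⟩
    obtain ⟨K, hKt, hfmK⟩ := Set.mem_iUnion₂.1 (htcov hfm)
    have hmKc : m ∈ Kᶜ := fun hmem => hmK (Set.mem_biUnion hKt hmem)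
    exact hfmK (subset_closure ⟨m, hmKc, rfl⟩)
  exact hK₀comp.of_isClosed_subset (hU.preimage hf).isClosed_compl hsub
end

section
/- Let Δ^{k+1} be the standard (k+1)-simplex, and for distinct p,q ∈ {0,...,k+1}, let Δ^{k+1}_{p,q} = Δ^{k+1}_p ∩ Δ^{k+1}_q be the codimension-two face and Ũ^{k+1}_{p,q} the set of points t_p·b_{k+1,p} + t_q·b_{k+1,q} + Σ_{r≠p,q} t_r·e_r with t_p,t_q ≥ 0, t_r > 0 for r ≠ p,q, and Σ t_r = 1, where b_{k+1,p} is the barycenter of the face Δ^{k+1}_p. Then Ũ^{k+1}_{p₁,q₁} ∩ Ũ^{k+1}_{p₂,q₂} = ∅ whenever {p₁,q₁} ≠ {p₂,q₂}. -/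
open scoped BigOperators
noncomputable section

/-- The vertex `e_p` of the standard simplex, in barycentric coordinates. -/
def vtx {n : ℕ} (p : Fin n) : Fin n → ℝ := fun r => if r = p then 1 else 0

/-- The barycenter `b_{k+1,p}` of the facet `Δ^{k+1}_p` opposite the vertex `e_p`,
in barycentric coordinates on `Δ^{k+1}` (which has `k+2` vertices). -/
def faceBary (k : ℕ) (p : Fin (k+2)) : Fin (k+2) → ℝ :=
  fun r => if r = p then 0 else 1 / (k+1)

/-- The neighborhood `Ũ^{k+1}_{p,q}` of the interior of the codimension-two face
`Δ^{k+1}_{p,q}`: points `t_p·b_{k+1,p} + t_q·b_{k+1,q} + Σ_{r≠p,q} t_r·e_r` with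
`t_p,t_q ≥ 0`, `t_r > 0` for `r ≠ p,q`, and `Σ t_r = 1`. -/
def Utilde (k : ℕ) (p q : Fin (k+2)) : Set (Fin (k+2) → ℝ) :=
  { x | ∃ t : Fin (k+2) → ℝ,
      0 ≤ t p ∧ 0 ≤ t q ∧ (∀ r, r ≠ p → r ≠ q → 0 < t r) ∧ (∑ r, t r) = 1 ∧
      x = t p • faceBary k p + t q • faceBary k q +
          ∑ r ∈ Finset.univ.filter (fun r => r ≠ p ∧ r ≠ q), t r • vtx r }

lemma Utilde_coords {k : ℕ} {p q : Fin (k+2)} (hpq : p ≠ q) {x : Fin (k+2) → ℝ}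
    (hx : x ∈ Utilde k p q) :
    0 ≤ x p ∧ 0 ≤ x q ∧ ∀ r, r ≠ p → r ≠ q → x p + x q < x r := by
  obtain ⟨t, hp, hq, hr, _hsum, rfl⟩ := hx
  have hk : (0:ℝ) < (k:ℝ) + 1 := by positivity
  have eval : ∀ s : Fin (k+2),
      (t p • faceBary k p + t q • faceBary k q +
        ∑ r ∈ Finset.univ.filter (fun r => r ≠ p ∧ r ≠ q), t r • vtx r) s =
      t p * faceBary k p s + t q * faceBary k q s +
        (if s ≠ p ∧ s ≠ q then t s else 0) := by
    intro s
    simp only [Pi.add_apply, Pi.smul_apply, smul_eq_mul, Finset.sum_apply]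
    congr 1
    have : ∀ r : Fin (k+2), t r * vtx r s = if s = r then t r else 0 := by
      intro r; by_cases h : s = r <;> simp [vtx, h]
    rw [Finset.sum_congr rfl fun r _ => this r, Finset.sum_ite_eq]
    simp
  have hxp : (t p • faceBary k p + t q • faceBary k q +
        ∑ r ∈ Finset.univ.filter (fun r => r ≠ p ∧ r ≠ q), t r • vtx r) p
      = t q / ((k:ℝ)+1) := by
    rw [eval]; simp [faceBary, hpq, hpq.symm]; ring
  have hxq : (t p • faceBary k p + t q • faceBary k q +
        ∑ r ∈ Finset.univ.filter (fun r => r ≠ p ∧ r ≠ q), t r • vtx r) q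
      = t p / ((k:ℝ)+1) := by
    rw [eval]; simp [faceBary, hpq, hpq.symm]; ring
  refine ⟨by rw [hxp]; positivity, by rw [hxq]; positivity, fun r hrp hrq => ?_⟩
  have hxr : (t p • faceBary k p + t q • faceBary k q +
        ∑ r ∈ Finset.univ.filter (fun r => r ≠ p ∧ r ≠ q), t r • vtx r) r
      = t p / ((k:ℝ)+1) + t q / ((k:ℝ)+1) + t r := by
    rw [eval]; simp [faceBary, hrp, hrq]; ring
  rw [hxp, hxq, hxr]
  have := hr r hrp hrq
  linarith

/-- The sets `Ũ^{k+1}_{p,q}` for distinct unordered pairs `{p,q}` are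
pairwise disjoint. -/
theorem Utilde_disjoint (k : ℕ) (p₁ q₁ p₂ q₂ : Fin (k+2))
    (h₁ : p₁ ≠ q₁) (h₂ : p₂ ≠ q₂)
    (hpairs : ({p₁, q₁} : Set (Fin (k+2))) ≠ {p₂, q₂}) :
    Utilde k p₁ q₁ ∩ Utilde k p₂ q₂ = ∅ := by
  by_contra h
  obtain ⟨x, hx1, hx2⟩ := Set.nonempty_iff_ne_empty.mpr h
  obtain ⟨ha1, hb1, hc1⟩ := Utilde_coords h₁ hx1
  obtain ⟨ha2, hb2, hc2⟩ := Utilde_coords h₂ hx2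
  -- find s ∈ {p₁,q₁} \ {p₂,q₂}
  have hs : ∃ s, (s = p₁ ∨ s = q₁) ∧ s ≠ p₂ ∧ s ≠ q₂ := by
    by_contra hcon
    push_neg at hcon
    have hp := hcon p₁ (Or.inl rfl)
    have hq := hcon q₁ (Or.inr rfl)
    apply hpairs
    rcases or_iff_not_imp_left.mpr hp with rfl | rfl <;>
      rcases or_iff_not_imp_left.mpr hq with rfl | rfl
    · exact absurd rfl h₁
    · rfl
    · exact Set.pair_comm _ _
    · exact absurd rfl h₁
  have hs' : ∃ s, (s = p₂ ∨ s = q₂) ∧ s ≠ p₁ ∧ s ≠ q₁ := by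
    by_contra hcon
    push_neg at hcon
    have hp := hcon p₂ (Or.inl rfl)
    have hq := hcon q₂ (Or.inr rfl)
    apply hpairs
    rcases or_iff_not_imp_left.mpr hp with rfl | rfl <;>
      rcases or_iff_not_imp_left.mpr hq with rfl | rfl
    · exact absurd rfl h₂
    · rfl
    · exact Set.pair_comm _ _
    · exact absurd rfl h₂
  obtain ⟨s, hs12, hsp, hsq⟩ := hs
  obtain ⟨s', hs'12, hs'p, hs'q⟩ := hs'
  have h1 : x p₂ + x q₂ < x s := hc2 s hsp hsq
  have h2 : x p₁ + x q₁ < x s' := hc1 s' hs'p hs'q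
  have h3 : x s ≤ x p₁ + x q₁ := by rcases hs12 with rfl | rfl <;> linarith
  have h4 : x s' ≤ x p₂ + x q₂ := by rcases hs'12 with rfl | rfl <;> linarith
  linarith

end
end
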